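/- (Theorem 1.) Under the hypotheses: f_k(·;μ) are functions on the N full quadrature nodes for k ∈ K and μ ∈ D ⊆ ℝ^p; each f_k is L_f-Lipschitz in μ with respect to the sup norm over nodes; training parameters μ_1,…,μ_M fill D up to Δ = max_{μ∈D} min_m ‖μ − μ_m‖₂; the sparse weights ŵ (nonnegative, ∑ ŵ_i ≤ |Ω|) satisfy |⟨w − ŵ, ζ_n⟩| ≤ ε₁ for all R SVD modes ζ_n (orthonormal in ℝ^N); every snapshot φ_{k,m} = f_k(·;μ_m) satisfies ‖φ_{k,m} − proj φ_{k,m}‖₂² summed over all k, m is ≤ E (truncated SVD tail energy); and S_f = max_{k,m} ∑_{n=1}^R |⟨φ_{k,m}, ζ_n⟩|. Then for every μ ∈ D, max_k |⟨w, f_k(·;μ)⟩ − ⟨ŵ, f_k(·;μ)⟩| ≤ (‖w‖₂ + ‖ŵ‖₂)√E + ε₁ S_f + 2|Ω| L_f Δ. -/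

import Mathlib

/-!
Fix `μ`, `k` and a training parameter `μ_m` within `Δ` of `μ`, and write `φ = f_k(·;μ_m)` as its
projection `∑ₙ cₙ ζₙ` plus a residual `r`. The quadrature error `⟨w - ŵ, f_k(·;μ)⟩` then splits as
`⟨w - ŵ, f_k(·;μ) - φ⟩ + ⟨w - ŵ, r⟩ + ∑ₙ cₙ ⟨w - ŵ, ζₙ⟩`. The first term is at most
`(∑ w + ∑ ŵ) L_f Δ ≤ 2 |Ω| L_f Δ` by the Lipschitz bound, the second is at most
`(‖w‖₂ + ‖ŵ‖₂) ‖r‖₂ ≤ (‖w‖₂ + ‖ŵ‖₂) √E` by Cauchy–Schwarz, and the third at most `ε₁ ∑ₙ |cₙ| ≤ ε₁ S_f`.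
-/

open Finset

section QuadratureError

variable {ι κ : Type*} [Fintype ι] [Fintype κ]

lemma sum_mul_eq_sum_mul_sub_add_sum_mul_residual_add_sum_mul_modes
    (a g φ : ι → ℝ) (c : κ → ℝ) (ζ : κ → ι → ℝ) :
    ∑ i, a i * g i =
      ∑ i, a i * (g i - φ i) + ∑ i, a i * (φ i - ∑ n, c n * ζ n i) +
        ∑ n, c n * ∑ i, a i * ζ n i := by
  have hmodes : ∑ n, c n * ∑ i, a i * ζ n i = ∑ i, a i * ∑ n, c n * ζ n i := by
    simp only [mul_sum]
    rw [sum_comm]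
    exact sum_congr rfl fun _ _ => sum_congr rfl fun _ _ => by ring
  rw [hmodes, ← sum_add_distrib, ← sum_add_distrib]
  exact sum_congr rfl fun _ _ => by ring

lemma abs_sum_mul_le_sqrt_mul_sqrt (v r : ι → ℝ) :
    |∑ i, v i * r i| ≤ √(∑ i, v i ^ 2) * √(∑ i, r i ^ 2) := by
  rw [← Real.sqrt_mul (sum_nonneg fun i _ => sq_nonneg (v i))]
  exact Real.abs_le_sqrt (sum_mul_sq_le_sq_mul_sq _ _ _)

lemma abs_sum_sub_mul_le_sqrt_add_sqrt_mul (w w' r : ι → ℝ) :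
    |∑ i, (w i - w' i) * r i| ≤
      (√(∑ i, w i ^ 2) + √(∑ i, w' i ^ 2)) * √(∑ i, r i ^ 2) := by
  have hsplit : ∑ i, (w i - w' i) * r i = ∑ i, w i * r i - ∑ i, w' i * r i := by
    rw [← sum_sub_distrib]
    exact sum_congr rfl fun _ _ => by ring
  rw [hsplit, add_mul]
  exact (abs_sub _ _).trans
    (add_le_add (abs_sum_mul_le_sqrt_mul_sqrt w r) (abs_sum_mul_le_sqrt_mul_sqrt w' r))

lemma abs_sum_sub_mul_le_of_nonneg_of_abs_le {w w' g : ι → ℝ} {C : ℝ}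
    (hw : ∀ i, 0 ≤ w i) (hw' : ∀ i, 0 ≤ w' i) (hg : ∀ i, |g i| ≤ C) :
    |∑ i, (w i - w' i) * g i| ≤ (∑ i, w i + ∑ i, w' i) * C := by
  calc |∑ i, (w i - w' i) * g i|
      ≤ ∑ i, |w i - w' i| * |g i| := by
        simpa only [abs_mul] using abs_sum_le_sum_abs (fun i => (w i - w' i) * g i) univ
    _ ≤ ∑ i, (w i + w' i) * C := by
        refine sum_le_sum fun i _ => mul_le_mul ?_ (hg i) (abs_nonneg _) (add_nonneg (hw i) (hw' i))
        exact abs_sub_le_iff.mpr ⟨by linarith [hw' i], by linarith [hw i]⟩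
    _ = (∑ i, w i + ∑ i, w' i) * C := by rw [← sum_mul, sum_add_distrib]

lemma abs_sum_mul_le_sum_abs_mul_of_abs_le {c d : κ → ℝ} {ε : ℝ} (hd : ∀ n, |d n| ≤ ε) :
    |∑ n, c n * d n| ≤ (∑ n, |c n|) * ε := by
  calc |∑ n, c n * d n|
      ≤ ∑ n, |c n| * |d n| := by
        simpa only [abs_mul] using abs_sum_le_sum_abs (fun n => c n * d n) univ
    _ ≤ ∑ n, |c n| * ε := sum_le_sum fun n _ => mul_le_mul_of_nonneg_left (hd n) (abs_nonneg _)
    _ = (∑ n, |c n|) * ε := by rw [sum_mul]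

lemma le_of_sum_sum_le {F : ι → κ → ℝ} {E : ℝ} (hF : ∀ i j, 0 ≤ F i j)
    (h : ∑ i, ∑ j, F i j ≤ E) (i : ι) (j : κ) : F i j ≤ E :=
  calc F i j ≤ ∑ j', F i j' := single_le_sum (fun j' _ => hF i j') (mem_univ j)
    _ ≤ ∑ i', ∑ j', F i' j' :=
      single_le_sum (f := fun i' => ∑ j', F i' j') (fun i' _ => sum_nonneg fun j' _ => hF i' j')
        (mem_univ i)
    _ ≤ E := h

end QuadratureError

theorem stmt_14_general (N K M R P : ℕ) (D : Set (Fin P → ℝ))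
    (f : Fin K → (Fin P → ℝ) → (Fin N → ℝ))
    (μs : Fin M → (Fin P → ℝ)) (hμs : ∀ m, μs m ∈ D)
    (L_f Ω Δ ε₁ E S_f : ℝ)
    (hL : 0 ≤ L_f) (hε₁ : 0 ≤ ε₁)
    (hLip : ∀ k, ∀ μ ∈ D, ∀ μ' ∈ D, ∀ i,
      |f k μ i - f k μ' i| ≤ L_f * Real.sqrt (∑ j, (μ j - μ' j) ^ 2))
    (hΔ : ∀ μ ∈ D, ∃ m : Fin M, Real.sqrt (∑ j, (μ j - μs m j) ^ 2) ≤ Δ)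
    (ζ : Fin R → Fin N → ℝ)
    (w w' : Fin N → ℝ)
    (hw : ∀ i, 0 ≤ w i) (hw' : ∀ i, 0 ≤ w' i)
    (hwsum : ∑ i, w i = Ω) (hw'sum : ∑ i, w' i ≤ Ω)
    (hconstr : ∀ n, |∑ i, (w i - w' i) * ζ n i| ≤ ε₁)
    (htail : ∑ k, ∑ m,
        (∑ i, (f k (μs m) i - ∑ n, (∑ j, f k (μs m) j * ζ n j) * ζ n i) ^ 2) ≤ E)
    (hSf : ∀ k m, ∑ n, |∑ j, f k (μs m) j * ζ n j| ≤ S_f) :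
    ∀ μ ∈ D, ∀ k : Fin K,
      |∑ i, w i * f k μ i - ∑ i, w' i * f k μ i| ≤
        (Real.sqrt (∑ i, w i ^ 2) + Real.sqrt (∑ i, w' i ^ 2)) * Real.sqrt E +
          ε₁ * S_f + 2 * Ω * L_f * Δ := by
  intro μ hμ k
  obtain ⟨m, hm⟩ := hΔ μ hμ
  have hLΔ : 0 ≤ L_f * Δ := mul_nonneg hL ((Real.sqrt_nonneg _).trans hm)
  set φ := f k (μs m)
  have hclose : ∀ i, |f k μ i - φ i| ≤ L_f * Δ := fun i =>
    (hLip k μ hμ (μs m) (hμs m) i).trans (mul_le_mul_of_nonneg_left hm hL)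
  have hresidual : ∑ i, (φ i - ∑ n, (∑ j, φ j * ζ n j) * ζ n i) ^ 2 ≤ E :=
    le_of_sum_sum_le (fun _ _ => sum_nonneg fun _ _ => sq_nonneg _) htail k m
  rw [← sum_sub_distrib]
  simp_rw [← sub_mul]
  rw [sum_mul_eq_sum_mul_sub_add_sum_mul_residual_add_sum_mul_modes _ _ φ
    (fun n => ∑ j, φ j * ζ n j) ζ]
  have hA := abs_sum_sub_mul_le_of_nonneg_of_abs_le hw hw' hclose
  have hB := (abs_sum_sub_mul_le_sqrt_add_sqrt_mul w w' _).trans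
    (mul_le_mul_of_nonneg_left (Real.sqrt_le_sqrt hresidual) (by positivity))
  have hC := (abs_sum_mul_le_sum_abs_mul_of_abs_le hconstr).trans
    (mul_le_mul_of_nonneg_right (hSf k m) hε₁)
  have hA' : (∑ i, w i + ∑ i, w' i) * (L_f * Δ) ≤ 2 * Ω * L_f * Δ := by nlinarith
  exact (abs_add_three _ _ _).trans (by linarith)

theorem stmt_14 (N K M R P : ℕ) (D : Set (Fin P → ℝ))
    (f : Fin K → (Fin P → ℝ) → (Fin N → ℝ))
    (μs : Fin M → (Fin P → ℝ)) (hμs : ∀ m, μs m ∈ D)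
    (L_f Ω Δ ε₁ E S_f : ℝ)
    (hL : 0 ≤ L_f) (hΩ : 0 < Ω) (hε₁ : 0 ≤ ε₁) (hE : 0 ≤ E)
    (hLip : ∀ k, ∀ μ ∈ D, ∀ μ' ∈ D, ∀ i,
      |f k μ i - f k μ' i| ≤ L_f * Real.sqrt (∑ j, (μ j - μ' j) ^ 2))
    (hΔ : ∀ μ ∈ D, ∃ m : Fin M, Real.sqrt (∑ j, (μ j - μs m j) ^ 2) ≤ Δ)
    (ζ : Fin R → Fin N → ℝ)
    (hζ : ∀ n m, ∑ i, ζ n i * ζ m i = if n = m then (1 : ℝ) else 0)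
    (w w' : Fin N → ℝ)
    (hw : ∀ i, 0 ≤ w i) (hw' : ∀ i, 0 ≤ w' i)
    (hwsum : ∑ i, w i = Ω) (hw'sum : ∑ i, w' i ≤ Ω)
    (hconstr : ∀ n, |∑ i, (w i - w' i) * ζ n i| ≤ ε₁)
    (htail : ∑ k, ∑ m,
        (∑ i, (f k (μs m) i - ∑ n, (∑ j, f k (μs m) j * ζ n j) * ζ n i) ^ 2) ≤ E)
    (hSf : ∀ k m, ∑ n, |∑ j, f k (μs m) j * ζ n j| ≤ S_f) :
    ∀ μ ∈ D, ∀ k : Fin K,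
      |∑ i, w i * f k μ i - ∑ i, w' i * f k μ i| ≤
        (Real.sqrt (∑ i, w i ^ 2) + Real.sqrt (∑ i, w' i ^ 2)) * Real.sqrt E +
          ε₁ * S_f + 2 * Ω * L_f * Δ :=
  stmt_14_general N K M R P D f μs hμs L_f Ω Δ ε₁ E S_f hL hε₁ hLip hΔ ζ w w' hw hw' hwsum hw'sum
    hconstr htail hSf
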